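/- Let (a_ℓ)_{ℓ≥1} be a sequence of positive integers with continued fraction value α = [0; a_1, a_2, …] and convergents p_ℓ/q_ℓ. Let w, m, N be integers with 1 ≤ w ≤ m ≤ N, and define the quadratic polynomial P(X) := (q_{w−1} q_m − q_w q_{m−1}) X² − (q_{w−1} p_m − q_w p_{m−1} + p_{w−1} q_m − p_w q_{m−1}) X + (p_{w−1} p_m − p_w p_{m−1}). If β ∈ (0,1) is a real root of P with |α − β| ≤ 2/q_N², then |P(α)| ≤ 16 · q_m / (q_w · q_N²). -/

import Mathlib

/-!
Writing `f_ℓ(X) = q_ℓ X - p_ℓ`, the polynomial is the determinant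
`P = f_{w-1} f_m - f_w f_{m-1}`. Since each `f_ℓ` is affine,
`f_i(α) f_j(α) - f_i(β) f_j(β) = (α - β) (f_i(α) q_j + q_i f_j(β))`, so `P(β) = 0` gives
`P(α) = (α - β) · (two such brackets)`. The classical estimate `|f_ℓ(α)| ≤ 1 / q_{ℓ+1}`
bounds the first summand of each bracket by `q_m / q_w`; together with `|α - β| ≤ 2 / q_N²`
it bounds the second by `1 + 2 ≤ 3 q_m / q_w`. Hence `|P(α)| ≤ (2 / q_N²) · 8 q_m / q_w`.
-/

open Filter Topology

/-- Denominators of the convergents of the continued fraction `[0; a 1, a 2, ...]`: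
`q_0 = 1`, `q_1 = a_1`, `q_{ℓ+2} = a_{ℓ+2} q_{ℓ+1} + q_ℓ`
(this encodes `q_{-1} = 0, q_0 = 1, q_ℓ = a_ℓ q_{ℓ-1} + q_{ℓ-2}`). -/
def cfQ (a : ℕ → ℕ) : ℕ → ℕ
  | 0 => 1
  | 1 => a 1
  | (n + 2) => a (n + 2) * cfQ a (n + 1) + cfQ a n

/-- Numerators of the convergents: `p_0 = 0`, `p_1 = 1`,
`p_{ℓ+2} = a_{ℓ+2} p_{ℓ+1} + p_ℓ` (encoding `p_{-1} = 1, p_0 = 0`). -/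
def cfP (a : ℕ → ℕ) : ℕ → ℕ
  | 0 => 0
  | 1 => 1
  | (n + 2) => a (n + 2) * cfP a (n + 1) + cfP a n


noncomputable def cfConv (a : ℕ → ℕ) (n : ℕ) : ℝ := (cfP a n : ℝ) / cfQ a n

def cfForm (a : ℕ → ℕ) (ℓ : ℕ) (x : ℝ) : ℝ := cfQ a ℓ * x - cfP a ℓ

section Convergents

variable {a : ℕ → ℕ}

lemma cfQ_pos (h1 : 0 < a 1) : ∀ n, 0 < cfQ a n
  | 0 => Nat.one_pos
  | 1 => h1
  | n + 2 => Nat.add_pos_right _ (cfQ_pos h1 n)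

lemma cfQ_monotone (hpos : ∀ ℓ, 1 ≤ ℓ → 0 < a ℓ) : Monotone (cfQ a) := by
  refine monotone_nat_of_le_succ fun n => ?_
  cases n with
  | zero => exact hpos 1 le_rfl
  | succ n =>
    calc cfQ a (n + 1) ≤ a (n + 2) * cfQ a (n + 1) :=
          Nat.le_mul_of_pos_left _ (hpos (n + 2) (by omega))
      _ ≤ cfQ a (n + 2) := Nat.le_add_right _ _

lemma cfP_succ_mul_cfQ_sub {R : Type*} [CommRing R] (a : ℕ → ℕ) :
    ∀ n, (cfP a (n + 1) : R) * cfQ a n - cfP a n * cfQ a (n + 1) = (-1) ^ n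
  | 0 => by simp [cfP, cfQ]
  | n + 1 => by
    have ih := cfP_succ_mul_cfQ_sub (R := R) a n
    simp only [cfP, cfQ]
    push_cast
    linear_combination -ih

lemma cfConv_succ_sub (h1 : 0 < a 1) (n : ℕ) :
    cfConv a (n + 1) - cfConv a n = (-1) ^ n / (cfQ a n * cfQ a (n + 1)) := by
  have hn : (cfQ a n : ℝ) ≠ 0 := by exact_mod_cast (cfQ_pos h1 n).ne'
  have hn1 : (cfQ a (n + 1) : ℝ) ≠ 0 := by exact_mod_cast (cfQ_pos h1 (n + 1)).ne'
  rw [cfConv, cfConv, div_sub_div _ _ hn1 hn, ← cfP_succ_mul_cfQ_sub a n]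
  ring

lemma neg_one_pow_mul_cfConv_sub_mem_Icc (hpos : ∀ ℓ, 1 ≤ ℓ → 0 < a ℓ) (n : ℕ) :
    ∀ ℓ, (-1) ^ ℓ * (cfConv a (ℓ + n) - cfConv a ℓ) ∈
      Set.Icc 0 (1 / (cfQ a ℓ * cfQ a (ℓ + 1) : ℝ)) := by
  have hq : ∀ k, (0 : ℝ) < cfQ a k := fun k => by exact_mod_cast cfQ_pos (hpos 1 le_rfl) k
  induction n with
  | zero => intro ℓ; simpa using (one_div_pos.2 (mul_pos (hq ℓ) (hq (ℓ + 1)))).le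
  | succ n ih =>
    intro ℓ
    obtain ⟨ih0, ih1⟩ := ih (ℓ + 1)
    have hstep : (-1) ^ ℓ * (cfConv a (ℓ + (n + 1)) - cfConv a ℓ) =
        1 / (cfQ a ℓ * cfQ a (ℓ + 1)) -
          (-1) ^ (ℓ + 1) * (cfConv a (ℓ + 1 + n) - cfConv a (ℓ + 1)) := by
      have hsq : ((-1 : ℝ) ^ ℓ) * (-1) ^ ℓ = 1 := by rw [← mul_pow]; norm_num
      rw [← add_assoc, add_right_comm ℓ n 1, pow_succ]
      linear_combination (-1 : ℝ) ^ ℓ * cfConv_succ_sub (hpos 1 le_rfl) ℓ +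
        hsq / (cfQ a ℓ * cfQ a (ℓ + 1) : ℝ)
    have hmono : (1 : ℝ) / (cfQ a (ℓ + 1) * cfQ a (ℓ + 2)) ≤ 1 / (cfQ a ℓ * cfQ a (ℓ + 1)) := by
      have : (cfQ a ℓ : ℝ) ≤ cfQ a (ℓ + 2) := by exact_mod_cast cfQ_monotone hpos (by omega)
      gcongr 1 / ?_
      · exact mul_pos (hq ℓ) (hq (ℓ + 1))
      · rw [mul_comm]; gcongr
    rw [hstep]
    constructor <;> linarith

lemma abs_sub_cfConv_le (hpos : ∀ ℓ, 1 ≤ ℓ → 0 < a ℓ) {α : ℝ}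
    (hα : Tendsto (cfConv a) atTop (𝓝 α)) (ℓ : ℕ) :
    |α - cfConv a ℓ| ≤ 1 / (cfQ a ℓ * cfQ a (ℓ + 1)) := by
  have hlim : Tendsto (fun n => (-1) ^ ℓ * (cfConv a (ℓ + n) - cfConv a ℓ)) atTop
      (𝓝 ((-1) ^ ℓ * (α - cfConv a ℓ))) :=
    ((hα.comp ((tendsto_add_atTop_nat ℓ).congr fun n => add_comm n ℓ)).sub_const _).const_mul _
  obtain ⟨h0, h1⟩ := isClosed_Icc.mem_of_tendsto hlim
    (Eventually.of_forall (neg_one_pow_mul_cfConv_sub_mem_Icc hpos · ℓ))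
  rwa [← abs_of_nonneg h0, abs_mul, abs_neg_one_pow, one_mul] at h1

lemma abs_cfForm_le (hpos : ∀ ℓ, 1 ≤ ℓ → 0 < a ℓ) {α : ℝ}
    (hα : Tendsto (cfConv a) atTop (𝓝 α)) {k ℓ : ℕ} (hk : k ≤ ℓ + 1) :
    |cfForm a ℓ α| ≤ 1 / cfQ a k := by
  have hq : ∀ n, (0 : ℝ) < cfQ a n := fun n => by exact_mod_cast cfQ_pos (hpos 1 le_rfl) n
  have hqℓ : (cfQ a ℓ : ℝ) ≠ 0 := (hq ℓ).ne'
  have hform : cfForm a ℓ α = cfQ a ℓ * (α - cfConv a ℓ) := by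
    rw [cfForm, cfConv]
    field_simp
  calc |cfForm a ℓ α| = cfQ a ℓ * |α - cfConv a ℓ| := by
        rw [hform, abs_mul, abs_of_pos (hq ℓ)]
    _ ≤ cfQ a ℓ * (1 / (cfQ a ℓ * cfQ a (ℓ + 1))) := by
        gcongr; exact abs_sub_cfConv_le hpos hα ℓ
    _ = 1 / cfQ a (ℓ + 1) := by field_simp
    _ ≤ 1 / cfQ a k := by
        gcongr
        · exact hq k
        · exact_mod_cast cfQ_monotone hpos hk

lemma abs_cfForm_le_add_mul (hpos : ∀ ℓ, 1 ≤ ℓ → 0 < a ℓ) {α : ℝ}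
    (hα : Tendsto (cfConv a) atTop (𝓝 α)) {k ℓ : ℕ} (hk : k ≤ ℓ + 1) (β : ℝ) :
    |cfForm a ℓ β| ≤ 1 / cfQ a k + cfQ a ℓ * |α - β| := by
  have hshift : cfForm a ℓ β = cfForm a ℓ α - cfQ a ℓ * (α - β) := by
    simp only [cfForm]
    ring
  calc |cfForm a ℓ β| ≤ |cfForm a ℓ α| + |cfQ a ℓ * (α - β)| := by
        rw [hshift]
        exact abs_sub _ _
    _ ≤ 1 / cfQ a k + cfQ a ℓ * |α - β| := by
        rw [abs_mul, Nat.abs_cast]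
        gcongr
        exact abs_cfForm_le hpos hα hk

lemma cfForm_mul_cfForm_sub (a : ℕ → ℕ) (i j : ℕ) (α β : ℝ) :
    cfForm a i α * cfForm a j α - cfForm a i β * cfForm a j β =
      (α - β) * (cfForm a i α * cfQ a j + cfQ a i * cfForm a j β) := by
  simp only [cfForm]
  ring

lemma abs_cfForm_mul_cfQ_add_le (hpos : ∀ ℓ, 1 ≤ ℓ → 0 < a ℓ) {α β : ℝ}
    (hα : Tendsto (cfConv a) atTop (𝓝 α)) {i j w m N : ℕ} (hiw : i ≤ w) (hwi : w ≤ i + 1)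
    (hjm : j ≤ m) (hmj : m ≤ j + 1) (hwm : w ≤ m) (hmN : m ≤ N)
    (hclose : |α - β| ≤ 2 / (cfQ a N : ℝ) ^ 2) :
    |cfForm a i α * cfQ a j + cfQ a i * cfForm a j β| ≤ 4 * (cfQ a m / cfQ a w : ℝ) := by
  have hq : ∀ n, (0 : ℝ) < cfQ a n := fun n => by exact_mod_cast cfQ_pos (hpos 1 le_rfl) n
  have hmono : ∀ {k l : ℕ}, k ≤ l → (cfQ a k : ℝ) ≤ cfQ a l := fun h => by
    exact_mod_cast cfQ_monotone hpos h
  have hα_term : |cfForm a i α * cfQ a j| ≤ cfQ a m / cfQ a w := by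
    rw [abs_mul, abs_of_pos (hq j), ← one_div_mul_eq_div]
    exact mul_le_mul (abs_cfForm_le hpos hα hwi) (hmono hjm) (hq j).le (by positivity)
  have hβ_term : |cfQ a i * cfForm a j β| ≤ 3 := by
    have hi : (cfQ a i : ℝ) ≤ cfQ a m := hmono (hiw.trans hwm)
    have hij : (cfQ a i * cfQ a j : ℝ) ≤ cfQ a N ^ 2 := by
      rw [sq]
      exact mul_le_mul (hmono (by omega)) (hmono (by omega)) (hq j).le (hq N).le
    rw [abs_mul, abs_of_pos (hq i)]
    calc cfQ a i * |cfForm a j β| ≤ cfQ a i * (1 / cfQ a m + cfQ a j * (2 / cfQ a N ^ 2)) := by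
          gcongr
          exact (abs_cfForm_le_add_mul hpos hα hmj β).trans (by gcongr)
      _ = cfQ a i / cfQ a m + 2 * (cfQ a i * cfQ a j / cfQ a N ^ 2) := by ring
      _ ≤ 1 + 2 * 1 := by
          gcongr
          · exact div_le_one_of_le₀ hi (hq m).le
          · exact div_le_one_of_le₀ hij (by positivity)
      _ = 3 := by norm_num
  have hratio : (1 : ℝ) ≤ cfQ a m / cfQ a w := (one_le_div (hq w)).2 (hmono hwm)
  calc |cfForm a i α * cfQ a j + cfQ a i * cfForm a j β|
      ≤ |cfForm a i α * cfQ a j| + |cfQ a i * cfForm a j β| := abs_add_le _ _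
    _ ≤ cfQ a m / cfQ a w + 3 := add_le_add hα_term hβ_term
    _ ≤ 4 * (cfQ a m / cfQ a w : ℝ) := by linarith

end Convergents

theorem quadratic_polynomial_estimate_general (a : ℕ → ℕ) (hpos : ∀ ℓ, 1 ≤ ℓ → 0 < a ℓ)
    (α : ℝ) (hα : Tendsto (fun ℓ => (cfP a ℓ : ℝ) / (cfQ a ℓ : ℝ)) atTop (𝓝 α))
    (w m N : ℕ) (hwm : w ≤ m) (hmN : m ≤ N)
    (P : ℝ → ℝ)
    (hP : ∀ X : ℝ, P X =
        ((cfQ a (w - 1) : ℝ) * (cfQ a m : ℝ) - (cfQ a w : ℝ) * (cfQ a (m - 1) : ℝ)) * X ^ 2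
        - ((cfQ a (w - 1) : ℝ) * (cfP a m : ℝ) - (cfQ a w : ℝ) * (cfP a (m - 1) : ℝ)
            + (cfP a (w - 1) : ℝ) * (cfQ a m : ℝ) - (cfP a w : ℝ) * (cfQ a (m - 1) : ℝ)) * X
        + ((cfP a (w - 1) : ℝ) * (cfP a m : ℝ) - (cfP a w : ℝ) * (cfP a (m - 1) : ℝ)))
    (β : ℝ) (hroot : P β = 0)
    (hclose : |α - β| ≤ 2 / (cfQ a N : ℝ) ^ 2) :
    |P α| ≤ 16 * (cfQ a m : ℝ) / ((cfQ a w : ℝ) * (cfQ a N : ℝ) ^ 2) := by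
  have hdet : ∀ X, P X = cfForm a (w - 1) X * cfForm a m X - cfForm a w X * cfForm a (m - 1) X :=
    fun X => by rw [hP]; simp only [cfForm]; ring
  have hPα : P α = (α - β) *
      ((cfForm a (w - 1) α * cfQ a m + cfQ a (w - 1) * cfForm a m β) -
        (cfForm a w α * cfQ a (m - 1) + cfQ a w * cfForm a (m - 1) β)) := by
    linear_combination hdet α - hdet β + hroot + cfForm_mul_cfForm_sub a (w - 1) m α β -
      cfForm_mul_cfForm_sub a w (m - 1) α β
  have hfirst := abs_cfForm_mul_cfQ_add_le hpos hα (i := w - 1) (j := m) (by omega) (by omega)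
    le_rfl (by omega) hwm hmN hclose
  have hsecond := abs_cfForm_mul_cfQ_add_le hpos hα (i := w) (j := m - 1) le_rfl (by omega)
    (by omega) (by omega) hwm hmN hclose
  calc |P α| = |α - β| * |(cfForm a (w - 1) α * cfQ a m + cfQ a (w - 1) * cfForm a m β) -
        (cfForm a w α * cfQ a (m - 1) + cfQ a w * cfForm a (m - 1) β)| := by rw [hPα, abs_mul]
    _ ≤ 2 / (cfQ a N : ℝ) ^ 2 * (4 * (cfQ a m / cfQ a w : ℝ) + 4 * (cfQ a m / cfQ a w : ℝ)) := by
        gcongr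
        exact (abs_sub _ _).trans (add_le_add hfirst hsecond)
    _ = 16 * (cfQ a m : ℝ) / ((cfQ a w : ℝ) * (cfQ a N : ℝ) ^ 2) := by ring

theorem quadratic_polynomial_estimate (a : ℕ → ℕ) (hpos : ∀ ℓ, 1 ≤ ℓ → 0 < a ℓ)
    (α : ℝ) (hα : Tendsto (fun ℓ => (cfP a ℓ : ℝ) / (cfQ a ℓ : ℝ)) atTop (𝓝 α))
    (w m N : ℕ) (hw : 1 ≤ w) (hwm : w ≤ m) (hmN : m ≤ N)
    (P : ℝ → ℝ)
    (hP : ∀ X : ℝ, P X =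
        ((cfQ a (w - 1) : ℝ) * (cfQ a m : ℝ) - (cfQ a w : ℝ) * (cfQ a (m - 1) : ℝ)) * X ^ 2
        - ((cfQ a (w - 1) : ℝ) * (cfP a m : ℝ) - (cfQ a w : ℝ) * (cfP a (m - 1) : ℝ)
            + (cfP a (w - 1) : ℝ) * (cfQ a m : ℝ) - (cfP a w : ℝ) * (cfQ a (m - 1) : ℝ)) * X
        + ((cfP a (w - 1) : ℝ) * (cfP a m : ℝ) - (cfP a w : ℝ) * (cfP a (m - 1) : ℝ)))
    (β : ℝ) (hβ0 : 0 < β) (hβ1 : β < 1) (hroot : P β = 0)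
    (hclose : |α - β| ≤ 2 / (cfQ a N : ℝ) ^ 2) :
    |P α| ≤ 16 * (cfQ a m : ℝ) / ((cfQ a w : ℝ) * (cfQ a N : ℝ) ^ 2) :=
  quadratic_polynomial_estimate_general a hpos α hα w m N hwm hmN P hP β hroot hclose
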